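/- arXiv:1201.5570 — 2 statements merged into one kernel-verified Lean document; each statement's English description precedes it below -/
import Mathlib

section
/- Let Q : ℂ → (0,∞) be locally integrable, z₀ ∈ ℂ, 0 < r₁ < r₂ < ∞. Set ‖Q‖₁(z₀,r) = ∫_{S(z₀,r)} Q |dz| (integral over the circle of radius r), I = ∫_{r₁}^{r₂} dr/‖Q‖₁(z₀,r), and η₀(r) = 1/(I·‖Q‖₁(z₀,r)). Then for every measurable η : (r₁,r₂) → [0,∞] with ∫_{r₁}^{r₂} η(r) dr = 1, one has I^{−1} = ∫_{r₁<|z−z₀|<r₂} Q(z) η₀(|z−z₀|)² dm(z) ≤ ∫_{r₁<|z−z₀|<r₂} Q(z) η(|z−z₀|)² dm(z). -/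
/-!
In polar coordinates `z = z₀ + r e^{iθ}` the area element is `r dr dθ`, so for a radial weight `φ`
the annulus integral `∫ Q(z) φ(|z - z₀|)² dm(z)` becomes `∫_{r₁}^{r₂} φ(r)² ‖Q‖₁(z₀,r) dr`. Both
claims are then statements about the weight `N = ‖Q‖₁(z₀,·)` on `(r₁,r₂)`: `∫ η₀² N = I⁻¹` is a
direct computation, and for `∫ η = 1` integrating the pointwise AM-GM inequality
`2η ≤ I η² N + (I N)⁻¹` gives `2 ≤ I ∫ η² N + 1`.
Since `Q` is only a.e. measurable, the Fubini steps rest on the polar-coordinate map being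
quasi-measure-preserving.
-/

open MeasureTheory Set ENNReal
open scoped Real

/-- The arclength integral `‖Q‖₁(z₀,r) = ∫_{S(z₀,r)} Q |dz|` of a nonnegative function over
the circle of radius `r` centered at `z₀`, computed via the parametrization
`θ ↦ z₀ + r e^{iθ}`. -/
noncomputable def circleL1 (Q : ℂ → ℝ) (z₀ : ℂ) (r : ℝ) : ℝ≥0∞ :=
  ∫⁻ θ in Set.Ioc (0 : ℝ) (2 * Real.pi),
    ENNReal.ofReal (Q (z₀ + r * Complex.exp (θ * Complex.I)) * r)

theorem Function.Periodic.setLIntegral_Ioc_add_eq {f : ℝ → ℝ≥0∞} {T : ℝ}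
    (hf : Function.Periodic f T) (hT : 0 < T) (s t : ℝ) :
    ∫⁻ x in Ioc s (s + T), f x = ∫⁻ x in Ioc t (t + T), f x := by
  have := Fact.mk hT
  exact (AddCircle.lintegral_preimage T s hf.lift).trans
    (AddCircle.lintegral_preimage T t hf.lift).symm

theorem setLIntegral_comp_circleMap_Ioc_eq_Ioo (f : ℂ → ℝ≥0∞) (z₀ : ℂ) (r : ℝ) :
    ∫⁻ θ in Ioc 0 (2 * π), f (circleMap z₀ r θ) =
      ∫⁻ θ in Ioo (-π) π, f (circleMap z₀ r θ) := by
  have := ((periodic_circleMap z₀ r).comp f).setLIntegral_Ioc_add_eq Real.two_pi_pos 0 (-π)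
  rw [zero_add, show -π + 2 * π = π by ring] at this
  rw [setLIntegral_congr Ioo_ae_eq_Ioc]
  exact this

theorem lintegral_eq_lintegral_circleMap (z₀ : ℂ) (g : ℂ → ℝ≥0∞) :
    ∫⁻ z, g z = ∫⁻ p, ENNReal.ofReal p.1 * g (circleMap z₀ p.1 p.2)
      ∂(volume.restrict (Ioi 0)).prod (volume.restrict (Ioo (-π) π)) := by
  rw [← lintegral_add_left_eq_self g z₀, ← Complex.lintegral_comp_polarCoord_symm,
    show polarCoord.target = Ioi 0 ×ˢ Ioo (-π) π from rfl, Measure.volume_eq_prod,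
    Measure.prod_restrict]
  congr! with p
  rw [Complex.polarCoord_symm_apply, circleMap, Complex.exp_mul_I,
    ← Complex.ofReal_cos, ← Complex.ofReal_sin]

theorem measurable_circleMap_uncurry (z₀ : ℂ) :
    Measurable fun p : ℝ × ℝ => circleMap z₀ p.1 p.2 := by
  unfold circleMap; fun_prop

theorem quasiMeasurePreserving_circleMap_uncurry (z₀ : ℂ) :
    Measure.QuasiMeasurePreserving (fun p : ℝ × ℝ => circleMap z₀ p.1 p.2)
      ((volume.restrict (Ioi 0)).prod (volume.restrict (Ioo (-π) π))) volume := by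
  refine ⟨measurable_circleMap_uncurry z₀, Measure.AbsolutelyContinuous.mk fun s hs hs0 => ?_⟩
  have h0 := lintegral_eq_lintegral_circleMap z₀ (s.indicator 1)
  rw [lintegral_indicator_one hs, hs0, eq_comm, lintegral_eq_zero_iff (by
    exact measurable_fst.ennreal_ofReal.mul
      ((measurable_one.indicator hs).comp (measurable_circleMap_uncurry z₀)))] at h0
  rw [Measure.map_apply (measurable_circleMap_uncurry z₀) hs, measure_eq_zero_iff_ae_notMem]
  filter_upwards [h0, Measure.quasiMeasurePreserving_fst.ae (ae_restrict_mem measurableSet_Ioi)]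
    with p hp hp₁ hmem
  rw [Pi.zero_apply, indicator_of_mem (mem_preimage.1 hmem), Pi.one_apply, mul_one,
    ofReal_eq_zero] at hp
  exact hp.not_gt hp₁

theorem lintegral_mul_comp_norm_sub (z₀ : ℂ) {g : ℂ → ℝ≥0∞} (hg : AEMeasurable g)
    {φ : ℝ → ℝ≥0∞} (hφ : AEMeasurable φ (volume.restrict (Ioi 0))) :
    ∫⁻ z, g z * φ ‖z - z₀‖ =
      ∫⁻ r in Ioi 0, φ r * ∫⁻ θ in Ioc 0 (2 * π), g (circleMap z₀ r θ) * ENNReal.ofReal r := by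
  have hgΦ := hg.comp_quasiMeasurePreserving (quasiMeasurePreserving_circleMap_uncurry z₀)
  have hφ₁ := hφ.comp_quasiMeasurePreserving
    (Measure.quasiMeasurePreserving_fst (ν := volume.restrict (Ioo (-π) π)))
  have hpos : ∀ᵐ p ∂(volume.restrict (Ioi (0 : ℝ))).prod (volume.restrict (Ioo (-π) π)),
      0 < p.1 :=
    Measure.quasiMeasurePreserving_fst.ae (ae_restrict_mem measurableSet_Ioi)
  calc ∫⁻ z, g z * φ ‖z - z₀‖
      = ∫⁻ p, φ p.1 * (g (circleMap z₀ p.1 p.2) * ENNReal.ofReal p.1)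
          ∂(volume.restrict (Ioi 0)).prod (volume.restrict (Ioo (-π) π)) := by
        rw [lintegral_eq_lintegral_circleMap z₀]
        refine lintegral_congr_ae (hpos.mono fun p hp => ?_)
        simp only [circleMap_sub_center, norm_circleMap_zero, abs_of_pos hp]
        ring
    _ = ∫⁻ r in Ioi 0, ∫⁻ θ in Ioo (-π) π,
          φ r * (g (circleMap z₀ r θ) * ENNReal.ofReal r) :=
        lintegral_prod _ (hφ₁.mul (hgΦ.mul measurable_fst.ennreal_ofReal.aemeasurable))
    _ = _ := by
        refine lintegral_congr_ae ?_
        filter_upwards [hgΦ.aestronglyMeasurable.prodMk_left] with r hslice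
        have hslice' : AEMeasurable (fun θ => g (circleMap z₀ r θ) * ENNReal.ofReal r)
            (volume.restrict (Ioo (-π) π)) := hslice.aemeasurable.mul_const _
        rw [lintegral_const_mul'' _ hslice',
          setLIntegral_comp_circleMap_Ioc_eq_Ioo (fun z => g z * ENNReal.ofReal r)]

theorem setLIntegral_preimage_norm_sub_mul (z₀ : ℂ) {s : Set ℝ} (hs : MeasurableSet s)
    (hs₀ : s ⊆ Ioi 0) {g : ℂ → ℝ≥0∞} (hg : AEMeasurable g) {φ : ℝ → ℝ≥0∞}
    (hφ : AEMeasurable φ (volume.restrict s)) :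
    ∫⁻ z in (fun z => ‖z - z₀‖) ⁻¹' s, g z * φ ‖z - z₀‖ =
      ∫⁻ r in s, φ r * ∫⁻ θ in Ioc 0 (2 * π), g (circleMap z₀ r θ) * ENNReal.ofReal r := by
  have hφs : AEMeasurable (s.indicator φ) (volume.restrict (Ioi 0)) := by
    rwa [aemeasurable_indicator_iff hs, Measure.restrict_restrict hs, inter_eq_left.2 hs₀]
  have hmeas : MeasurableSet ((fun z : ℂ => ‖z - z₀‖) ⁻¹' s) :=
    (measurable_id.sub_const z₀).norm hs
  have hind : ∀ z, ((fun z : ℂ => ‖z - z₀‖) ⁻¹' s).indicator (fun z => g z * φ ‖z - z₀‖) z =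
      g z * s.indicator φ ‖z - z₀‖ := fun z => by
    by_cases h : ‖z - z₀‖ ∈ s <;> simp [h]
  rw [← lintegral_indicator hmeas, lintegral_congr hind, lintegral_mul_comp_norm_sub z₀ hg hφs]
  calc _ = ∫⁻ r in Ioi 0, s.indicator (fun r => φ r *
          ∫⁻ θ in Ioc 0 (2 * π), g (circleMap z₀ r θ) * ENNReal.ofReal r) r :=
        lintegral_congr fun r => (indicator_mul_left _ _ _).symm
    _ = _ := by rw [setLIntegral_indicator hs, inter_eq_left.2 hs₀]

theorem circleL1_eq_setLIntegral_Ioo (Q : ℂ → ℝ) (z₀ : ℂ) (r : ℝ) :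
    circleL1 Q z₀ r = ∫⁻ θ in Ioo (-π) π, ENNReal.ofReal (Q (circleMap z₀ r θ) * r) :=
  setLIntegral_comp_circleMap_Ioc_eq_Ioo (fun z => ENNReal.ofReal (Q z * r)) z₀ r

theorem aemeasurable_ofReal_comp_circleMap_mul {Q : ℂ → ℝ} (hQ : AEMeasurable Q) (z₀ : ℂ) :
    AEMeasurable (fun p : ℝ × ℝ => ENNReal.ofReal (Q (circleMap z₀ p.1 p.2) * p.1))
      ((volume.restrict (Ioi 0)).prod (volume.restrict (Ioo (-π) π))) :=
  ((hQ.comp_quasiMeasurePreserving (quasiMeasurePreserving_circleMap_uncurry z₀)).mul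
    measurable_fst.aemeasurable).ennreal_ofReal

theorem aemeasurable_circleL1 {Q : ℂ → ℝ} (hQ : AEMeasurable Q) (z₀ : ℂ) :
    AEMeasurable (circleL1 Q z₀) (volume.restrict (Ioi 0)) := by
  simp_rw [funext (circleL1_eq_setLIntegral_Ioo Q z₀)]
  exact (aemeasurable_ofReal_comp_circleMap_mul hQ z₀).lintegral_prod_right'

theorem ae_circleL1_pos {Q : ℂ → ℝ} (hQ : AEMeasurable Q) (hQpos : ∀ z, 0 < Q z) (z₀ : ℂ) :
    ∀ᵐ r ∂volume.restrict (Ioi 0), 0 < circleL1 Q z₀ r := by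
  filter_upwards [ae_restrict_mem measurableSet_Ioi,
    (aemeasurable_ofReal_comp_circleMap_mul hQ z₀).aestronglyMeasurable.prodMk_left]
    with r (hr : 0 < r) hslice
  rw [circleL1_eq_setLIntegral_Ioo, pos_iff_ne_zero, Ne,
    lintegral_eq_zero_iff' hslice.aemeasurable]
  have : (ae (volume.restrict (Ioo (-π) π))).NeBot := ae_neBot.2 <| by
    simp [Measure.restrict_eq_zero, Real.pi_pos]
  intro h
  obtain ⟨θ, hθ⟩ := h.exists
  exact (ENNReal.ofReal_pos.2 (mul_pos (hQpos _) hr)).ne' hθ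

theorem ENNReal.two_mul_le_sq_mul_add_inv (a x : ℝ≥0∞) : 2 * a ≤ a ^ 2 * x + x⁻¹ := by
  rcases eq_or_ne x 0 with rfl | hx0
  · simp
  rcases eq_or_ne a 0 with rfl | ha0
  · simp
  rcases eq_or_ne x ⊤ with rfl | hxt
  · simp [mul_top (pow_ne_zero 2 ha0)]
  rcases eq_or_ne a ⊤ with rfl | hat
  · simp [top_mul hx0]
  lift a to NNReal using hat
  lift x to NNReal using hxt
  have hx : (0 : ℝ) < x := NNReal.coe_pos.2 (pos_iff_ne_zero.2 (coe_ne_zero.1 hx0))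
  rw [← coe_inv (by simpa using hx0), ← coe_pow, ← coe_mul, ← coe_add, ← coe_ofNat, ← coe_mul,
    coe_le_coe, ← NNReal.coe_le_coe]
  push_cast
  rw [← sub_nonneg]
  have : (a : ℝ) ^ 2 * x + (x : ℝ)⁻¹ - 2 * a = (a * x - 1) ^ 2 / x := by field_simp; ring
  rw [this]; positivity

section

variable {α : Type*} [MeasurableSpace α] {μ : Measure α} {N η : α → ℝ≥0∞}

theorem inv_lintegral_inv_le_lintegral_sq_mul (hN : AEMeasurable N μ) (hη : AEMeasurable η μ)
    (hη₁ : ∫⁻ x, η x ∂μ = 1) :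
    (∫⁻ x, (N x)⁻¹ ∂μ)⁻¹ ≤ ∫⁻ x, η x ^ 2 * N x ∂μ := by
  set I := ∫⁻ x, (N x)⁻¹ ∂μ
  rcases eq_or_ne I 0 with hI0 | hI0
  · have hNtop : ∀ᵐ x ∂μ, N x = ⊤ := ((lintegral_eq_zero_iff' hN.inv).1 hI0).mono
      fun x hx => ENNReal.inv_eq_zero.1 hx
    have : ∫⁻ x, η x ^ 2 * N x ∂μ = ∫⁻ x, ⊤ * η x ∂μ := lintegral_congr_ae <|
      hNtop.mono fun x hx => by rcases eq_or_ne (η x) 0 with h | h <;> simp [hx, h]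
    rw [this, lintegral_const_mul'' ⊤ hη, hη₁, mul_one]
    exact le_top
  rcases eq_or_ne I ⊤ with hIt | hIt
  · simp [hIt]
  have h2 : 2 ≤ I * ∫⁻ x, η x ^ 2 * N x ∂μ + 1 := calc
    2 = ∫⁻ x, 2 * η x ∂μ := by rw [lintegral_const_mul'' _ hη, hη₁, mul_one]
    _ ≤ ∫⁻ x, η x ^ 2 * (I * N x) + (I * N x)⁻¹ ∂μ :=
        lintegral_mono fun x => ENNReal.two_mul_le_sq_mul_add_inv _ _
    _ = I * ∫⁻ x, η x ^ 2 * N x ∂μ + I⁻¹ * I := by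
        simp_rw [ENNReal.mul_inv (Or.inl hI0) (Or.inl hIt)]
        rw [lintegral_add_right' _ (by fun_prop : AEMeasurable (fun x => I⁻¹ * (N x)⁻¹) μ),
          lintegral_const_mul' _ _ (inv_ne_top.2 hI0), ← lintegral_const_mul' _ _ hIt]
        congr 2 with x; ring
    _ = I * ∫⁻ x, η x ^ 2 * N x ∂μ + 1 := by rw [ENNReal.inv_mul_cancel hI0 hIt]
  rw [ENNReal.inv_le_iff_le_mul (fun _ => hI0) (fun h => absurd h hIt)]
  rwa [show (2 : ℝ≥0∞) = 1 + 1 by norm_num, ENNReal.add_le_add_iff_right one_ne_top] at h2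

theorem lintegral_inv_mul_sq_mul_eq [NeZero μ] (hN : AEMeasurable N μ)
    (hN₀ : ∀ᵐ x ∂μ, 0 < N x) :
    ∫⁻ x, ((∫⁻ y, (N y)⁻¹ ∂μ) * N x)⁻¹ ^ 2 * N x ∂μ = (∫⁻ y, (N y)⁻¹ ∂μ)⁻¹ := by
  set I := ∫⁻ y, (N y)⁻¹ ∂μ
  rcases eq_or_ne I 0 with hI0 | hI0
  · have hNtop : ∀ᵐ x ∂μ, N x = ⊤ := ((lintegral_eq_zero_iff' hN.inv).1 hI0).mono
      fun x hx => ENNReal.inv_eq_zero.1 hx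
    rw [lintegral_congr_ae (hNtop.mono fun x hx => by rw [hx, hI0]), hI0]
    simp [NeZero.ne μ]
  calc _ = ∫⁻ x, I⁻¹ ^ 2 * (N x)⁻¹ ∂μ := lintegral_congr_ae <| hN₀.mono fun x hx => by
        rcases eq_or_ne (N x) ⊤ with hxt | hxt
        · simp [hxt, mul_top hI0]
        rw [ENNReal.mul_inv (Or.inl hI0) (Or.inr hx.ne'), mul_pow, mul_assoc, sq (N x)⁻¹,
          mul_assoc, ENNReal.inv_mul_cancel hx.ne' hxt, mul_one]
    _ = I⁻¹ ^ 2 * I := lintegral_const_mul' _ _ (pow_ne_top (inv_ne_top.2 hI0))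
    _ = I⁻¹ := by
        rcases eq_or_ne I ⊤ with hIt | hIt
        · simp [hIt]
        rw [sq, mul_assoc, ENNReal.inv_mul_cancel hI0 hIt, mul_one]

end

/-- Lemma 4.3: for locally integrable `Q : ℂ → (0,∞)`, `0 < r₁ < r₂ < ∞`, with
`I = ∫_{r₁}^{r₂} dr/‖Q‖₁(z₀,r)` and `η₀(r) = 1/(I·‖Q‖₁(z₀,r))`, one has
`I⁻¹ = ∫_{r₁<|z−z₀|<r₂} Q(z) η₀(|z−z₀|)² dm(z) ≤ ∫_{r₁<|z−z₀|<r₂} Q(z) η(|z−z₀|)² dm(z)`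
for every measurable `η : (r₁,r₂) → [0,∞]` with `∫_{r₁}^{r₂} η(r) dr = 1`. -/
theorem ring_lower_estimate
    (Q : ℂ → ℝ) (hQl : LocallyIntegrable Q volume) (hQpos : ∀ z, 0 < Q z)
    (z₀ : ℂ) (r₁ r₂ : ℝ) (h₁ : 0 < r₁) (h₁₂ : r₁ < r₂) :
    (∫⁻ z in {z : ℂ | r₁ < ‖z - z₀‖ ∧ ‖z - z₀‖ < r₂},
        ENNReal.ofReal (Q z) *
          (((∫⁻ r in Set.Ioo r₁ r₂, (circleL1 Q z₀ r)⁻¹) *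
            circleL1 Q z₀ (‖z - z₀‖))⁻¹) ^ 2 ∂volume) =
      (∫⁻ r in Set.Ioo r₁ r₂, (circleL1 Q z₀ r)⁻¹)⁻¹ ∧
    ∀ η : ℝ → ℝ≥0∞, Measurable η → (∫⁻ r in Set.Ioo r₁ r₂, η r) = 1 →
      (∫⁻ r in Set.Ioo r₁ r₂, (circleL1 Q z₀ r)⁻¹)⁻¹ ≤
        ∫⁻ z in {z : ℂ | r₁ < ‖z - z₀‖ ∧ ‖z - z₀‖ < r₂},
          ENNReal.ofReal (Q z) * (η (‖z - z₀‖)) ^ 2 ∂volume := by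
  have hQ : AEMeasurable Q := hQl.aestronglyMeasurable.aemeasurable
  have hIoo : Ioo r₁ r₂ ⊆ Ioi 0 := Ioo_subset_Ioi_self.trans (Ioi_subset_Ioi h₁.le)
  have hN := (aemeasurable_circleL1 hQ z₀).mono_set hIoo
  have hN₀ := ae_restrict_of_ae_restrict_of_subset hIoo (ae_circleL1_pos hQ hQpos z₀)
  have hradial : ∀ φ : ℝ → ℝ≥0∞, AEMeasurable φ (volume.restrict (Ioo r₁ r₂)) →
      ∫⁻ z in {z : ℂ | r₁ < ‖z - z₀‖ ∧ ‖z - z₀‖ < r₂}, ENNReal.ofReal (Q z) * φ ‖z - z₀‖ =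
        ∫⁻ r in Ioo r₁ r₂, φ r * circleL1 Q z₀ r := fun φ hφ => by
    refine (setLIntegral_preimage_norm_sub_mul z₀ measurableSet_Ioo hIoo
      hQ.ennreal_ofReal hφ).trans ?_
    simp_rw [← ENNReal.ofReal_mul (hQpos _).le]
    rfl
  have : NeZero (volume.restrict (Ioo r₁ r₂)) := ⟨by simp [Measure.restrict_eq_zero, h₁₂]⟩
  refine ⟨?_, fun η hη hη₁ => ?_⟩
  · rw [hradial (fun r => ((∫⁻ r in Ioo r₁ r₂, (circleL1 Q z₀ r)⁻¹) * circleL1 Q z₀ r)⁻¹ ^ 2)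
      (by fun_prop)]
    exact lintegral_inv_mul_sq_mul_eq hN hN₀
  · rw [hradial (fun r => η r ^ 2) (hη.pow_const 2).aemeasurable]
    exact inv_lintegral_inv_le_lintegral_sq_mul hN hη.aemeasurable hη₁
end

section
/- Let Φ : [0,∞] → [0,∞] be a non-decreasing convex function with ∫_{δ₀}^∞ dτ/(τ Φ^{−1}(τ)) = ∞ for some δ₀ > Φ(0), and let Q : 𝔻 → [0,∞] be measurable on the unit disk with ∫_𝔻 Φ(Q(z)) dm(z) < ∞. Then ∫_0^1 dr/(r q(r)) = ∞, where q(r) is the average of Q over the circle |z| = r. -/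
/-!
By Jensen's inequality on each circle, `Φ(q(r)) ≤ p(r)`, where `p(r)` is the circle average of
`Φ ∘ Q`, so `q(r) ≤ Φ⁻¹(τ)` wherever `p(r) < τ`; in polar coordinates `∫₀¹ r p(r) dr` is a
multiple of `∫_𝔻 Φ(Q) dm < ∞`. On the dyadic annulus `2^{-k-2} < r ≤ 2^{-k-1}` Chebyshev's
inequality makes `p < c 4^k` on at least half of the radii once `c` is large, so that annulus
contributes at least `1 / (4 Φ⁻¹(c 4^k))` to `∫₀¹ dr/(r q(r))`.

Convexity and monotonicity make `Φ` right-continuous at `0`, so `Φ⁻¹ ≥ ε > 0` on `[δ₀, ∞)`: the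
divergence of `∫ dτ/(τ Φ⁻¹(τ))` happens at `∞`, which forces `Φ` to be unbounded (hence
of at least linear growth, so that `Q` is integrable on circles). Cutting `(c, ∞)` into the blocks
`[c 4^k, c 4^{k+1})` and using the monotonicity of `Φ⁻¹` bounds `∫_c^∞ dτ/(τ Φ⁻¹(τ))` by
`3 ∑ₖ 1/Φ⁻¹(c 4^k)`, so this series diverges too.
-/

open MeasureTheory Filter Set Metric ENNReal

open Real Topology NNReal

theorem MonotoneOn.continuousWithinAt_Ici_of_convexOn {f : ℝ → ℝ} {a : ℝ}
    (hmono : MonotoneOn f (Ici a)) (hconv : ConvexOn ℝ (Ici a) f) :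
    ContinuousWithinAt f (Ici a) a := by
  have hchord : ∀ x ∈ Icc a (a + 1), f x ≤ f a + (x - a) * (f (a + 1) - f a) := by
    rintro x ⟨hax, hx⟩
    rcases hax.eq_or_lt with rfl | hax
    · simp
    have := hconv.secant_mono self_mem_Ici (mem_Ici.2 hax.le) (by simp) hax.ne' (by simp) hx
    rw [add_sub_cancel_left, div_one, div_le_iff₀ (sub_pos.2 hax)] at this
    linarith
  have hline : Tendsto (fun x => f a + (x - a) * (f (a + 1) - f a)) (𝓝[≥] a) (𝓝 (f a)) := by
    have : Continuous fun x => f a + (x - a) * (f (a + 1) - f a) := by fun_prop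
    simpa using (this.tendsto a).mono_left nhdsWithin_le_nhds
  refine tendsto_of_tendsto_of_tendsto_of_le_of_le' tendsto_const_nhds hline ?_ ?_
  · filter_upwards [self_mem_nhdsWithin] with x hx using hmono self_mem_Ici hx hx
  · filter_upwards [Icc_mem_nhdsGE (lt_add_one a)] using hchord

section OrliczFunction

variable {Φ : ℝ → ℝ}

theorem MonotoneOn.measurable_comp {α : Type*} [MeasurableSpace α] (hmono : MonotoneOn Φ (Ici 0))
    {f : α → ℝ} (hf : Measurable f) (hf0 : ∀ x, 0 ≤ f x) : Measurable fun x => Φ (f x) := by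
  have hmono' : Monotone fun y => Φ (max y 0) := fun a b hab =>
    hmono (le_max_right a 0) (le_max_right b 0) (max_le_max_right 0 hab)
  convert hmono'.measurable.comp hf using 2 with x
  simp [max_eq_left (hf0 x)]

theorem exists_le_mul_of_convexOn (hmono : MonotoneOn Φ (Ici 0)) (hconv : ConvexOn ℝ (Ici 0) Φ)
    (hunb : ∀ τ, ∃ t, 0 ≤ t ∧ τ ≤ Φ t) : ∃ C, ∀ t, 0 ≤ t → t ≤ C * (Φ t - Φ 0 + 1) := by
  obtain ⟨t₁, ht₁, hΦt₁⟩ := hunb (Φ 0 + 1)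
  have ht₁pos : 0 < t₁ := ht₁.lt_of_ne (by rintro rfl; linarith)
  refine ⟨t₁, fun t ht => ?_⟩
  rcases le_total t t₁ with htt₁ | htt₁
  · nlinarith [hmono self_mem_Ici ht ht]
  · have hslope := hconv.secant_mono self_mem_Ici ht₁ ht ht₁pos.ne' (ht₁pos.trans_le htt₁).ne' htt₁
    rw [sub_zero, sub_zero, div_le_div_iff₀ ht₁pos (ht₁pos.trans_le htt₁)] at hslope
    nlinarith

/-- The generalized inverse `Φ⁻¹(τ) = inf {t ≥ 0 | τ ≤ Φ t}`; it is `0` when `Φ` stays below `τ`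
(`sInf ∅ = 0`). -/
noncomputable def genInv (Φ : ℝ → ℝ) (τ : ℝ) : ℝ := sInf {t : ℝ | 0 ≤ t ∧ τ ≤ Φ t}

theorem genInv_mono (hunb : ∀ τ, ∃ t, 0 ≤ t ∧ τ ≤ Φ t) : Monotone (genInv Φ) :=
  fun _ _ hτ => csInf_le_csInf ⟨0, fun _ ht => ht.1⟩ (hunb _) fun _ ht => ⟨ht.1, hτ.trans ht.2⟩

theorem le_genInv (hmono : MonotoneOn Φ (Ici 0)) {τ x : ℝ} (hτ : ∃ t, 0 ≤ t ∧ τ ≤ Φ t)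
    (hx : 0 ≤ x) (hxτ : Φ x < τ) : x ≤ genInv Φ τ :=
  le_csInf hτ fun _ ⟨ht, htτ⟩ =>
    le_of_not_gt fun htx => (hmono ht hx htx.le |>.trans_lt hxτ).not_ge htτ

theorem exists_ofReal_one_div_mul_genInv_le (hcont : ContinuousWithinAt Φ (Ici 0) 0) {δ : ℝ}
    (hδ : 0 < δ) (hΦδ : Φ 0 < δ) :
    ∃ C : ℝ≥0, ∀ τ, δ ≤ τ → ENNReal.ofReal (1 / (τ * genInv Φ τ)) ≤ C := by
  obtain ⟨ε, hε, hsmall⟩ : ∃ ε > 0, Ico 0 ε ⊆ {t | Φ t < δ} :=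
    (mem_nhdsGE_iff_exists_Ico_subset.1 (hcont (gt_mem_nhds hΦδ))).imp fun ε ⟨hε, h⟩ => ⟨hε, h⟩
  refine ⟨(1 / (δ * ε)).toNNReal, fun τ hτ => ?_⟩
  rcases eq_empty_or_nonempty {t : ℝ | 0 ≤ t ∧ τ ≤ Φ t} with hempty | hne
  · simp [genInv, hempty]
  have hεle : ε ≤ genInv Φ τ := le_csInf hne fun t ⟨ht, htτ⟩ =>
    le_of_not_gt fun htε => (hsmall ⟨ht, htε⟩ : Φ t < δ).not_ge (hτ.trans htτ)
  exact ENNReal.ofReal_le_ofReal <| one_div_le_one_div_of_le (by positivity) <|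
    mul_le_mul hτ hεle hε.le (hδ.trans_le hτ).le

theorem setLIntegral_Ioi_genInv_eq_top (hcont : ContinuousWithinAt Φ (Ici 0) 0) {δ c : ℝ}
    (hδ : 0 < δ) (hΦδ : Φ 0 < δ) (hδc : δ ≤ c)
    (hdiv : ∫⁻ τ in Ioi δ, ENNReal.ofReal (1 / (τ * genInv Φ τ)) = ⊤) :
    ∫⁻ τ in Ioi c, ENNReal.ofReal (1 / (τ * genInv Φ τ)) = ⊤ := by
  obtain ⟨C, hC⟩ := exists_ofReal_one_div_mul_genInv_le hcont hδ hΦδ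
  have hfin : ∫⁻ τ in Ioc δ c, ENNReal.ofReal (1 / (τ * genInv Φ τ)) < ⊤ :=
    setLIntegral_lt_top_of_le_nnreal (by simp) ⟨C, fun τ hτ => hC τ hτ.1.le⟩
  rw [← Ioc_union_Ioi_eq_Ioi hδc, lintegral_union measurableSet_Ioi Ioc_disjoint_Ioi_same,
    ENNReal.add_eq_top] at hdiv
  exact hdiv.resolve_left hfin.ne

theorem exists_le_of_setLIntegral_Ioi_genInv_eq_top (hcont : ContinuousWithinAt Φ (Ici 0) 0)
    {δ : ℝ} (hδ : 0 < δ) (hΦδ : Φ 0 < δ)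
    (hdiv : ∫⁻ τ in Ioi δ, ENNReal.ofReal (1 / (τ * genInv Φ τ)) = ⊤) (τ : ℝ) :
    ∃ t, 0 ≤ t ∧ τ ≤ Φ t := by
  by_contra! hbdd
  have hzero : ∀ σ ∈ Ioi (max δ τ), ENNReal.ofReal (1 / (σ * genInv Φ σ)) = 0 := fun σ hσ => by
    have : {t : ℝ | 0 ≤ t ∧ σ ≤ Φ t} = ∅ :=
      eq_empty_of_forall_notMem fun t ⟨ht, hσt⟩ =>
        (hbdd t ht).not_ge ((le_max_right δ τ).trans (hσ.out.le.trans hσt))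
    simp [genInv, this]
  have := setLIntegral_Ioi_genInv_eq_top hcont hδ hΦδ (le_max_left δ τ) hdiv
  rw [setLIntegral_congr_fun measurableSet_Ioi hzero, lintegral_zero] at this
  exact ENNReal.zero_ne_top this

theorem lintegral_ofReal_le_genInv {α : Type*} [MeasurableSpace α] {μ : Measure α}
    [IsProbabilityMeasure μ] (hΦ0 : ∀ t, 0 ≤ t → 0 ≤ Φ t)
    (hmono : MonotoneOn Φ (Ici 0)) (hconv : ConvexOn ℝ (Ici 0) Φ)
    (hunb : ∀ τ, ∃ t, 0 ≤ t ∧ τ ≤ Φ t) {f : α → ℝ} (hf : Measurable f) (hf0 : ∀ x, 0 ≤ f x)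
    {τ : ℝ} (hτ : ∫⁻ x, ENNReal.ofReal (Φ (f x)) ∂μ < ENNReal.ofReal τ) :
    ∫⁻ x, ENNReal.ofReal (f x) ∂μ ≤ ENNReal.ofReal (genInv Φ τ) := by
  have hΦf : Measurable fun x => Φ (f x) := hmono.measurable_comp hf hf0
  have hΦf0 : 0 ≤ᵐ[μ] fun x => Φ (f x) := ae_of_all _ fun x => hΦ0 _ (hf0 x)
  have hΦfi : Integrable (fun x => Φ (f x)) μ :=
    ⟨hΦf.aestronglyMeasurable, (hasFiniteIntegral_iff_ofReal hΦf0).2 (hτ.trans ofReal_lt_top)⟩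
  obtain ⟨C, hC⟩ := exists_le_mul_of_convexOn hmono hconv hunb
  have hfi : Integrable f μ :=
    ((hΦfi.sub (integrable_const _)).add (integrable_const 1) |>.const_mul C).mono'
      hf.aestronglyMeasurable (ae_of_all _ fun x => by
        rw [Real.norm_of_nonneg (hf0 x)]; exact hC _ (hf0 x))
  have hjensen : Φ (∫ x, f x ∂μ) < τ :=
    calc Φ (∫ x, f x ∂μ) ≤ ∫ x, Φ (f x) ∂μ :=
          hconv.map_integral_le
            (hconv.continuousOn_Ici (hmono.continuousWithinAt_Ici_of_convexOn hconv))
            isClosed_Ici (ae_of_all _ hf0) hfi hΦfi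
      _ < τ := by
          rw [integral_eq_lintegral_of_nonneg_ae hΦf0 hΦf.aestronglyMeasurable]
          exact ENNReal.toReal_lt_of_lt_ofReal hτ
  rw [← ofReal_integral_eq_lintegral_ofReal hfi (ae_of_all _ hf0)]
  exact ENNReal.ofReal_le_ofReal <| le_genInv hmono (hunb τ) (integral_nonneg hf0) hjensen

end OrliczFunction

theorem ofReal_one_div_mul_le_inv_ofReal_mul {g : ℝ → ℝ} (hg : Monotone g) {a τ : ℝ} (ha : 0 < a)
    (haτ : a ≤ τ) : ENNReal.ofReal (1 / (τ * g τ)) ≤ (ENNReal.ofReal (a * g a))⁻¹ := by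
  rcases le_or_gt (g a) 0 with hga | hga
  · simp [ENNReal.ofReal_of_nonpos (mul_nonpos_of_nonneg_of_nonpos ha.le hga)]
  calc ENNReal.ofReal (1 / (τ * g τ)) ≤ ENNReal.ofReal (a * g a)⁻¹ :=
        ENNReal.ofReal_le_ofReal <| by
          rw [one_div]
          exact inv_anti₀ (by positivity) (mul_le_mul haτ (hg haτ) hga.le (ha.trans_le haτ).le)
    _ ≤ _ := ENNReal.ofReal_inv_le

theorem tsum_inv_ofReal_eq_top_of_setLIntegral_Ioi_eq_top {g : ℝ → ℝ} (hg : Monotone g) {c : ℝ}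
    (hc : 0 < c) (h : ∫⁻ τ in Ioi c, ENNReal.ofReal (1 / (τ * g τ)) = ⊤) :
    ∑' k : ℕ, (ENNReal.ofReal (g (c * 4 ^ k)))⁻¹ = ⊤ := by
  have hcover : Ioi c ⊆ ⋃ k : ℕ, Ico (c * 4 ^ k) (c * 4 ^ (k + 1)) := fun τ hτ => by
    obtain ⟨k, hk⟩ := exists_nat_pow_near ((one_le_div hc).2 hτ.out.le) (by norm_num : (1 : ℝ) < 4)
    exact mem_iUnion.2 ⟨k, (le_div_iff₀' hc).1 hk.1, (div_lt_iff₀' hc).1 hk.2⟩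
  have hblock : ∀ k : ℕ, ∫⁻ τ in Ico (c * 4 ^ k) (c * 4 ^ (k + 1)),
      ENNReal.ofReal (1 / (τ * g τ)) ≤ 3 * (ENNReal.ofReal (g (c * 4 ^ k)))⁻¹ := fun k => by
    set a := c * 4 ^ k
    have ha : 0 < a := by positivity
    calc _ ≤ ∫⁻ _ in Ico a (c * 4 ^ (k + 1)), (ENNReal.ofReal (a * g a))⁻¹ :=
          setLIntegral_mono measurable_const fun τ hτ =>
            ofReal_one_div_mul_le_inv_ofReal_mul hg ha hτ.1
      _ = ENNReal.ofReal (3 * a) * (ENNReal.ofReal a)⁻¹ * (ENNReal.ofReal (g a))⁻¹ := by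
          rw [setLIntegral_const, Real.volume_Ico, ENNReal.ofReal_mul ha.le,
            ENNReal.mul_inv (Or.inl (by simpa using ha)) (Or.inl ofReal_ne_top),
            show c * 4 ^ (k + 1) - a = 3 * a by ring]
          ring
      _ = 3 * (ENNReal.ofReal (g a))⁻¹ := by
          rw [ENNReal.ofReal_mul (by norm_num), mul_assoc _ (ENNReal.ofReal a),
            ENNReal.mul_inv_cancel (by simpa using ha) ofReal_ne_top]
          simp
  have : ⊤ ≤ 3 * ∑' k : ℕ, (ENNReal.ofReal (g (c * 4 ^ k)))⁻¹ :=
    calc ⊤ = ∫⁻ τ in Ioi c, ENNReal.ofReal (1 / (τ * g τ)) := h.symm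
      _ ≤ ∑' k : ℕ, ∫⁻ τ in Ico (c * 4 ^ k) (c * 4 ^ (k + 1)), ENNReal.ofReal (1 / (τ * g τ)) :=
          (lintegral_mono_set hcover).trans (lintegral_iUnion_le _ _)
      _ ≤ _ := (ENNReal.tsum_le_tsum hblock).trans ENNReal.tsum_mul_left.le
  exact (ENNReal.mul_eq_top.1 (top_unique this)).elim (·.2) fun h3 => absurd h3.1 ofNat_ne_top

theorem circleMap_zero_eq_polarCoord_symm (r θ : ℝ) :
    circleMap 0 r θ = Complex.polarCoord.symm (r, θ) := by
  simp [circleMap, Complex.exp_mul_I, ← Complex.ofReal_cos, ← Complex.ofReal_sin, mul_add]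

theorem setLIntegral_Ioo_neg_pi_circleMap (f : ℂ → ℝ≥0∞) (r : ℝ) :
    ∫⁻ θ in Ioo (-π) π, f (circleMap 0 r θ) = ∫⁻ θ in Ioc 0 (2 * π), f (circleMap 0 r θ) := by
  have h₁ := isAddFundamentalDomain_Ioc two_pi_pos (-π)
  have h₂ := isAddFundamentalDomain_Ioc two_pi_pos 0
  rw [show -π + 2 * π = π by ring] at h₁
  rw [zero_add] at h₂
  rw [setLIntegral_congr Ioo_ae_eq_Ioc]
  refine h₁.setLIntegral_eq h₂ _ fun ⟨g, hg⟩ θ => ?_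
  obtain ⟨n, rfl⟩ := AddSubgroup.mem_zmultiples_iff.1 hg
  simp only [AddSubgroup.vadd_def, vadd_eq_add]
  rw [add_comm, ((periodic_circleMap 0 r).zsmul n) θ]

theorem lintegral_ball_eq_lintegral_circleMap {f : ℂ → ℝ≥0∞} (hf : Measurable f) (R : ℝ) :
    ∫⁻ z in ball (0 : ℂ) R, f z =
      ∫⁻ r in Ioo 0 R, ENNReal.ofReal r * ∫⁻ θ in Ioc 0 (2 * π), f (circleMap 0 r θ) := by
  have hmeas : Measurable fun p : ℝ × ℝ =>
      ENNReal.ofReal p.1 • (ball 0 R).indicator f (Complex.polarCoord.symm p) :=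
    (ENNReal.measurable_ofReal.comp measurable_fst).smul ((hf.indicator measurableSet_ball).comp
      (Complex.measurableEquivRealProd.symm.measurable.comp continuous_polarCoord_symm.measurable))
  rw [← lintegral_indicator measurableSet_ball, ← Complex.lintegral_comp_polarCoord_symm,
    polarCoord_target, Measure.volume_eq_prod, ← Measure.prod_restrict,
    lintegral_prod _ hmeas.aemeasurable, ← Ioi_inter_Iio (a := (0 : ℝ)) (b := R), inter_comm,
    ← Measure.restrict_restrict measurableSet_Iio, ← lintegral_indicator measurableSet_Iio]
  refine setLIntegral_congr_fun measurableSet_Ioi fun r (hr : 0 < r) => ?_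
  simp_rw [← circleMap_zero_eq_polarCoord_symm, smul_eq_mul,
    lintegral_const_mul' _ _ ofReal_ne_top, setLIntegral_Ioo_neg_pi_circleMap (indicator _ f)]
  by_cases hR : r < R <;> simp [indicator, hR, abs_of_pos hr]

theorem volume_Ioc_zero_two_pi : volume (Ioc 0 (2 * π)) = ENNReal.ofReal (2 * π) := by
  rw [Real.volume_Ioc, sub_zero]

theorem lintegral_ball_eq_two_pi_mul_setLAverage_circleMap {f : ℂ → ℝ≥0∞} (hf : Measurable f)
    (R : ℝ) :
    ∫⁻ z in ball (0 : ℂ) R, f z = ENNReal.ofReal (2 * π) *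
      ∫⁻ r in Ioo 0 R, ENNReal.ofReal r * ⨍⁻ θ in Ioc 0 (2 * π), f (circleMap 0 r θ) ∂volume := by
  rw [lintegral_ball_eq_lintegral_circleMap hf, ← lintegral_const_mul' _ _ ofReal_ne_top]
  refine lintegral_congr fun r => ?_
  rw [setLAverage_eq, volume_Ioc_zero_two_pi, mul_left_comm,
    ENNReal.mul_div_cancel (by simpa using two_pi_pos) ofReal_ne_top]

theorem measurable_setLAverage_circleMap {f : ℂ → ℝ≥0∞} (hf : Measurable f) :
    Measurable fun r => ⨍⁻ θ in Ioc 0 (2 * π), f (circleMap 0 r θ) ∂volume := by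
  simp_rw [setLAverage_eq]
  have hcircle : Measurable fun p : ℝ × ℝ => circleMap 0 p.1 p.2 := by
    unfold circleMap; fun_prop
  exact (Measurable.lintegral_prod_right' (hf.comp hcircle)).div_const _

theorem setLAverage_circleMap_le_genInv {Φ : ℝ → ℝ} (hΦ0 : ∀ t, 0 ≤ t → 0 ≤ Φ t)
    (hmono : MonotoneOn Φ (Ici 0)) (hconv : ConvexOn ℝ (Ici 0) Φ)
    (hunb : ∀ τ, ∃ t, 0 ≤ t ∧ τ ≤ Φ t) {Q : ℂ → ℝ} (hQm : Measurable Q) (hQ0 : ∀ z, 0 ≤ Q z)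
    (r : ℝ) {τ : ℝ}
    (hτ : ⨍⁻ θ in Ioc 0 (2 * π), ENNReal.ofReal (Φ (Q (circleMap 0 r θ))) ∂volume <
      ENNReal.ofReal τ) :
    ⨍⁻ θ in Ioc 0 (2 * π), ENNReal.ofReal (Q (circleMap 0 r θ)) ∂volume ≤
      ENNReal.ofReal (genInv Φ τ) := by
  have : NeZero (volume.restrict (Ioc 0 (2 * π))) :=
    ⟨by simpa [Measure.restrict_eq_zero] using two_pi_pos⟩
  exact lintegral_ofReal_le_genInv hΦ0 hmono hconv hunb
    (hQm.comp (continuous_circleMap 0 r).measurable) (fun _ => hQ0 _) hτ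

theorem circleL1_zero_div_eq_setLAverage (Q : ℂ → ℝ) {r : ℝ} (hr : 0 < r) :
    circleL1 Q 0 r / ENNReal.ofReal (2 * π * r) =
      ⨍⁻ θ in Ioc 0 (2 * π), ENNReal.ofReal (Q (circleMap 0 r θ)) ∂volume := by
  simp_rw [circleL1, ENNReal.ofReal_mul' hr.le]
  rw [lintegral_mul_const' _ _ ofReal_ne_top,
    ENNReal.mul_div_mul_right _ _ (by simpa using hr) ofReal_ne_top, setLAverage_eq,
    volume_Ioc_zero_two_pi]
  rfl

theorem inv_le_setLIntegral_inv_mul_Ioc {p q : ℝ → ℝ≥0∞} (hp : Measurable p) {t : ℝ} (ht : 0 < t)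
    {τ x : ℝ≥0∞} (hτ0 : τ ≠ 0) (hτ : τ ≠ ⊤) (hpq : ∀ r ∈ Ioc (t / 2) t, p r < τ → q r ≤ x)
    (hmass : ∫⁻ r in Ioc (t / 2) t, ENNReal.ofReal r * p r ≤
      ENNReal.ofReal (t / 2) * τ * ENNReal.ofReal (t / 4)) :
    (4 * x)⁻¹ ≤ ∫⁻ r in Ioc (t / 2) t, (ENNReal.ofReal r * q r)⁻¹ := by
  set I := Ioc (t / 2) t
  have hmarkov : ENNReal.ofReal (t / 2) * τ * volume (I ∩ {r | τ ≤ p r}) ≤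
      ∫⁻ r in I, ENNReal.ofReal r * p r :=
    calc _ = ∫⁻ _ in I ∩ {r | τ ≤ p r}, ENNReal.ofReal (t / 2) * τ := (setLIntegral_const _ _).symm
      _ ≤ ∫⁻ r in I ∩ {r | τ ≤ p r}, ENNReal.ofReal r * p r :=
          setLIntegral_mono (by fun_prop) fun r hr =>
            mul_le_mul' (ENNReal.ofReal_le_ofReal hr.1.1.le) hr.2
      _ ≤ _ := lintegral_mono_set inter_subset_left
  have hbad : volume (I ∩ {r | τ ≤ p r}) ≤ ENNReal.ofReal (t / 4) :=
    (ENNReal.mul_le_mul_iff_right (by simp [ht, hτ0]) (by finiteness)).1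
      (hmarkov.trans hmass)
  have hgood : ENNReal.ofReal (t / 4) ≤ volume (I ∩ {r | p r < τ}) := by
    have hsplit := measure_le_inter_add_sdiff volume I {r | p r < τ}
    rw [Real.volume_Ioc, show t - t / 2 = t / 4 + t / 4 by ring,
      ENNReal.ofReal_add (by positivity) (by positivity)] at hsplit
    refine (ENNReal.add_le_add_iff_right ofReal_ne_top).1 (hsplit.trans (add_le_add_right ?_ _))
    exact (measure_mono fun r hr => mem_inter hr.1 (not_lt.1 (hr.2 : ¬p r < τ))).trans hbad
  calc (4 * x)⁻¹ = (ENNReal.ofReal t * x)⁻¹ * ENNReal.ofReal (t / 4) := by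
        have ht0 : ENNReal.ofReal t ≠ 0 := by simpa using ht
        rw [ENNReal.mul_inv (Or.inl four_ne_zero) (Or.inl ofNat_ne_top),
          ENNReal.mul_inv (Or.inl ht0) (Or.inl ofReal_ne_top),
          ENNReal.ofReal_div_of_pos four_pos, ENNReal.ofReal_ofNat, div_eq_mul_inv,
          show (ENNReal.ofReal t)⁻¹ * x⁻¹ * (ENNReal.ofReal t * 4⁻¹) =
            (ENNReal.ofReal t)⁻¹ * ENNReal.ofReal t * (4⁻¹ * x⁻¹) by ring,
          ENNReal.inv_mul_cancel ht0 ofReal_ne_top, one_mul]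
    _ ≤ (ENNReal.ofReal t * x)⁻¹ * volume (I ∩ {r | p r < τ}) := by gcongr
    _ = ∫⁻ _ in I ∩ {r | p r < τ}, (ENNReal.ofReal t * x)⁻¹ := (setLIntegral_const _ _).symm
    _ ≤ ∫⁻ r in I ∩ {r | p r < τ}, (ENNReal.ofReal r * q r)⁻¹ :=
        setLIntegral_mono' (measurableSet_Ioc.inter (measurableSet_lt hp measurable_const))
          fun r hr => ENNReal.inv_le_inv.2 (mul_le_mul' (ENNReal.ofReal_le_ofReal hr.1.2)
            (hpq r hr.1 hr.2))
    _ ≤ _ := lintegral_mono_set inter_subset_left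

theorem Ioc_half_inv_two_pow_subset_Ioo (k : ℕ) :
    Ioc ((2⁻¹ : ℝ) ^ (k + 1) / 2) (2⁻¹ ^ (k + 1)) ⊆ Ioo 0 1 := fun _ hr =>
  ⟨(by positivity : (0 : ℝ) < 2⁻¹ ^ (k + 1) / 2).trans hr.1,
    hr.2.trans_lt (pow_lt_one₀ (by norm_num) (by norm_num) (by omega))⟩

theorem pairwise_disjoint_Ioc_half_inv_two_pow :
    Pairwise (Function.onFun Disjoint fun k : ℕ =>
      Ioc ((2⁻¹ : ℝ) ^ (k + 1) / 2) (2⁻¹ ^ (k + 1))) := by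
  have hanti : Antitone fun k : ℕ => (2⁻¹ : ℝ) ^ (k + 1) := fun a b hab =>
    pow_le_pow_of_le_one (by norm_num) (by norm_num) (by omega)
  simpa only [Order.succ_eq_add_one, pow_succ _ (_ + 1), div_eq_mul_inv] using
    hanti.pairwise_disjoint_on_Ioc_succ

theorem setLIntegral_inv_mul_eq_top {p q x : ℝ → ℝ≥0∞} (hp : Measurable p)
    (hfin : ∫⁻ r in Ioo 0 1, ENNReal.ofReal r * p r ≠ ⊤)
    (hpq : ∀ r ∈ Ioo (0 : ℝ) 1, ∀ τ : ℝ, p r < ENNReal.ofReal τ → q r ≤ x τ)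
    {c₀ : ℝ} (hx : ∀ c ≥ c₀, ∑' k : ℕ, (x (c * 4 ^ k))⁻¹ = ⊤) :
    ∫⁻ r in Ioo 0 1, (ENNReal.ofReal r * q r)⁻¹ = ⊤ := by
  set M := (∫⁻ r in Ioo 0 1, ENNReal.ofReal r * p r).toReal
  set c := max c₀ (32 * M + 1)
  have hc : 0 < c := lt_max_of_lt_right (by positivity)
  set t : ℕ → ℝ := fun k => 2⁻¹ ^ (k + 1)
  have ht : ∀ k, 0 < t k := fun k => by positivity
  have hIsub : ∀ k, Ioc (t k / 2) (t k) ⊆ Ioo 0 1 := Ioc_half_inv_two_pow_subset_Ioo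
  have hmass : ∀ k, ∫⁻ r in Ioc (t k / 2) (t k), ENNReal.ofReal r * p r ≤
      ENNReal.ofReal (t k / 2) * ENNReal.ofReal (c * 4 ^ k) * ENNReal.ofReal (t k / 4) := by
    intro k
    have hscale : t k / 2 * (c * 4 ^ k) * (t k / 4) = c / 32 := by
      simp only [t, show (4 : ℝ) ^ k = (2 ^ k) ^ 2 by rw [← pow_mul, mul_comm, pow_mul]; norm_num,
        inv_pow, pow_succ]
      field_simp
      ring
    rw [← ENNReal.ofReal_mul (by positivity), ← ENNReal.ofReal_mul (by positivity), hscale]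
    calc _ ≤ ∫⁻ r in Ioo 0 1, ENNReal.ofReal r * p r := lintegral_mono_set (hIsub k)
      _ = ENNReal.ofReal M := (ENNReal.ofReal_toReal hfin).symm
      _ ≤ _ := ENNReal.ofReal_le_ofReal (by linarith [le_max_right c₀ (32 * M + 1)])
  have hannulus : ∀ k, (4 * x (c * 4 ^ k))⁻¹ ≤
      ∫⁻ r in Ioc (t k / 2) (t k), (ENNReal.ofReal r * q r)⁻¹ := fun k =>
    inv_le_setLIntegral_inv_mul_Ioc hp (ht k) (ENNReal.ofReal_pos.2 (by positivity)).ne'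
      ofReal_ne_top (fun r hr => hpq r (hIsub k hr) _) (hmass k)
  refine top_unique ?_
  calc ⊤ = ∑' k : ℕ, (4 * x (c * 4 ^ k))⁻¹ := by
        simp_rw [ENNReal.mul_inv (Or.inl four_ne_zero) (Or.inl ofNat_ne_top)]
        rw [ENNReal.tsum_mul_left, hx c (le_max_left _ _), ENNReal.mul_top (by simp)]
    _ ≤ ∑' k : ℕ, ∫⁻ r in Ioc (t k / 2) (t k), (ENNReal.ofReal r * q r)⁻¹ :=
        ENNReal.tsum_le_tsum hannulus
    _ = ∫⁻ r in ⋃ k, Ioc (t k / 2) (t k), (ENNReal.ofReal r * q r)⁻¹ :=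
        (lintegral_iUnion (fun _ => measurableSet_Ioc)
          pairwise_disjoint_Ioc_half_inv_two_pow _).symm
    _ ≤ _ := lintegral_mono_set (iUnion_subset hIsub)

/-- Theorem 2.1: let `Φ : [0,∞] → [0,∞]` be non-decreasing and convex with
`∫_{δ₀}^∞ dτ/(τ Φ⁻¹(τ)) = ∞` for some `δ₀ > Φ(0)` (`Φ⁻¹` the generalized inverse), and let
`Q : 𝔻 → [0,∞]` be measurable with `∫_𝔻 Φ(Q) dm < ∞`. Then `∫_0^1 dr/(r q(r)) = ∞`, where
`q(r) = ‖Q‖₁(0,r)/(2πr)` is the average of `Q` over the circle `|z| = r`. -/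
theorem divergence_of_reciprocal_circle_averages
    (Φ : ℝ → ℝ) (hΦ0 : ∀ t, 0 ≤ t → 0 ≤ Φ t)
    (hΦmono : MonotoneOn Φ (Set.Ici 0)) (hΦconv : ConvexOn ℝ (Set.Ici 0) Φ)
    (δ₀ : ℝ) (hδ₀ : Φ 0 < δ₀)
    (hΦdiv : (∫⁻ τ in Set.Ioi δ₀,
        ENNReal.ofReal (1 / (τ * sInf {t : ℝ | 0 ≤ t ∧ τ ≤ Φ t}))) = ⊤)
    (Q : ℂ → ℝ) (hQm : Measurable Q) (hQpos : ∀ z, 0 ≤ Q z)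
    (hQint : (∫⁻ z in Metric.ball (0 : ℂ) 1, ENNReal.ofReal (Φ (Q z)) ∂volume) < ⊤) :
    (∫⁻ r in Set.Ioo (0 : ℝ) 1,
        (ENNReal.ofReal r * (circleL1 Q 0 r / ENNReal.ofReal (2 * Real.pi * r)))⁻¹) = ⊤ := by
  have hδ₀pos : 0 < δ₀ := (hΦ0 0 le_rfl).trans_lt hδ₀
  have hcont := hΦmono.continuousWithinAt_Ici_of_convexOn hΦconv
  have hunb := exists_le_of_setLIntegral_Ioi_genInv_eq_top hcont hδ₀pos hδ₀ hΦdiv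
  have hdyadic : ∀ c ≥ δ₀, ∑' k : ℕ, (ENNReal.ofReal (genInv Φ (c * 4 ^ k)))⁻¹ = ⊤ :=
    fun c hc => tsum_inv_ofReal_eq_top_of_setLIntegral_Ioi_eq_top (genInv_mono hunb)
      (hδ₀pos.trans_le hc) (setLIntegral_Ioi_genInv_eq_top hcont hδ₀pos hδ₀ hc hΦdiv)
  have hΦQ : Measurable fun z => ENNReal.ofReal (Φ (Q z)) :=
    ENNReal.measurable_ofReal.comp (hΦmono.measurable_comp hQm hQpos)
  have hfin : ∫⁻ r in Ioo 0 1, ENNReal.ofReal r *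
      ⨍⁻ θ in Ioc 0 (2 * π), ENNReal.ofReal (Φ (Q (circleMap 0 r θ))) ∂volume ≠ ⊤ := fun h => by
    rw [lintegral_ball_eq_two_pi_mul_setLAverage_circleMap hΦQ, h,
      ENNReal.mul_top (by simpa using two_pi_pos)] at hQint
    exact hQint.ne rfl
  have := setLIntegral_inv_mul_eq_top (measurable_setLAverage_circleMap hΦQ) hfin
    (fun r _ _ => setLAverage_circleMap_le_genInv hΦ0 hΦmono hΦconv hunb hQm hQpos r) hdyadic
  rwa [setLIntegral_congr_fun measurableSet_Ioo fun r hr => by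
    rw [circleL1_zero_div_eq_setLAverage Q hr.1]]
end
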